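/- For any two strongly admissible labellings Lab1 ⊑ Lab2 with min-max numberings MM1 and MM2 respectively, it need not be that MM2 restricted to the domain of MM1 equals MM1; however, for every in- or out-labelled argument x of Lab1, MM2(x) ≤ MM1(x). -/

import Mathlib

inductive Label where
  | inn | out | und
deriving DecidableEq

/-- A labelling is admissible if every in-labelled argument has all its attackers
labelled out, and every out-labelled argument has at least one in-labelled attacker. -/
def Admissible {Ar : Type*} (att : Ar → Ar → Prop) (L : Ar → Label) : Prop :=
  (∀ x, L x = Label.inn → ∀ y, att y x → L y = Label.out) ∧
  (∀ x, L x = Label.out → ∃ y, att y x ∧ L y = Label.inn)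

/-- A min-max numbering (with only natural-number values): in-arguments are numbered
1 + max of the numbers of their out-labelled attackers (max ∅ = 0), and out-arguments
1 + min of the numbers of their in-labelled attackers. -/
def IsMinMax {Ar : Type*} (att : Ar → Ar → Prop) (L : Ar → Label) (MM : Ar → ℕ) : Prop :=
  (∀ x, L x = Label.inn → MM x = sSup (MM '' {y | att y x ∧ L y = Label.out}) + 1) ∧
  (∀ x, L x = Label.out → MM x = sInf (MM '' {y | att y x ∧ L y = Label.inn}) + 1)

/-- Strongly admissible: admissible and admitting a min-max numbering with only
natural-number (finite) values. -/
def StronglyAdmissible {Ar : Type*} (att : Ar → Ar → Prop) (L : Ar → Label) : Prop :=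
  Admissible att L ∧ ∃ MM : Ar → ℕ, IsMinMax att L MM

/-- Complete labelling: admissible, and every undec argument has an undec attacker
and no in-labelled attacker. -/
def CompleteLab {Ar : Type*} (att : Ar → Ar → Prop) (L : Ar → Label) : Prop :=
  Admissible att L ∧
  ∀ x, L x = Label.und →
    (∃ y, att y x ∧ L y = Label.und) ∧ ∀ y, att y x → L y ≠ Label.inn

/-- The order on labellings: Lab1 ⊑ Lab2 iff in(Lab1) ⊆ in(Lab2) and out(Lab1) ⊆ out(Lab2). -/
def LabLe {Ar : Type*} (L1 L2 : Ar → Label) : Prop :=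
  (∀ x, L1 x = Label.inn → L2 x = Label.inn) ∧
  (∀ x, L1 x = Label.out → L2 x = Label.out)

/-!
Induction on `MM1 x`. If `x` is in, admissibility makes every attacker of `x` out in both
labellings, so both suprema range over all attackers of `x`, each of smaller `MM1`-number than `x`
(finiteness matters here: in `ℕ` the `sSup` of an unbounded set is `0`). If `x` is out in `Lab1`,
the in-attacker realising the `MM1`-minimum is still in in `Lab2`, so it bounds the `MM2`-minimum.
-/

section MinMax

variable {Ar : Type*} {att : Ar → Ar → Prop} {L : Ar → Label} {MM : Ar → ℕ} {x : Ar}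

theorem Admissible.setOf_attacks_out_of_inn (hL : Admissible att L) (hx : L x = .inn) :
    {y | att y x ∧ L y = .out} = {y | att y x} :=
  Set.ext fun y => ⟨And.left, fun hy => ⟨hy, hL.1 x hx y hy⟩⟩

theorem IsMinMax.eq_sSup_of_inn (hMM : IsMinMax att L MM) (hL : Admissible att L)
    (hx : L x = .inn) : MM x = sSup (MM '' {y | att y x}) + 1 := by
  rw [← hL.setOf_attacks_out_of_inn hx, hMM.1 x hx]

theorem IsMinMax.le_succ_of_inn (hMM : IsMinMax att L MM) (hL : Admissible att L)
    (hx : L x = .inn) {n : ℕ} (h : ∀ y, att y x → MM y ≤ n) : MM x ≤ n + 1 := by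
  rw [hMM.eq_sSup_of_inn hL hx, Nat.add_le_add_iff_right]
  exact csSup_le' (Set.forall_mem_image.2 h)

theorem IsMinMax.exists_eq_succ_of_inn [Finite Ar] (hMM : IsMinMax att L MM)
    (hL : Admissible att L) (hx : L x = .inn) :
    ∃ n, MM x = n + 1 ∧ ∀ y, att y x → MM y ≤ n :=
  ⟨_, hMM.eq_sSup_of_inn hL hx,
    fun _ hy => le_csSup (Set.toFinite _).bddAbove (Set.mem_image_of_mem MM hy)⟩

theorem IsMinMax.le_succ_of_out (hMM : IsMinMax att L MM) (hx : L x = .out) {z : Ar}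
    (hz : att z x) (hzL : L z = .inn) : MM x ≤ MM z + 1 := by
  rw [hMM.2 x hx, Nat.add_le_add_iff_right]
  exact Nat.sInf_le ⟨z, ⟨hz, hzL⟩, rfl⟩

theorem IsMinMax.exists_eq_succ_of_out (hMM : IsMinMax att L MM) (hL : Admissible att L)
    (hx : L x = .out) : ∃ z, att z x ∧ L z = .inn ∧ MM x = MM z + 1 := by
  obtain ⟨y, hy⟩ := hL.2 x hx
  obtain ⟨z, ⟨hz, hzL⟩, hMMz⟩ :=
    Nat.sInf_mem (Set.Nonempty.image MM (s := {y | att y x ∧ L y = .inn}) ⟨y, hy⟩)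
  exact ⟨z, hz, hzL, by rw [hMM.2 x hx, hMMz]⟩

end MinMax

/-- If Lab1 ⊑ Lab2 are strongly admissible with min-max numberings
MM1 and MM2, then MM2(x) ≤ MM1(x) for every in/out argument x of Lab1. -/
theorem minMax_antitone
    {Ar : Type*} [Fintype Ar] (att : Ar → Ar → Prop) (Lab1 Lab2 : Ar → Label)
    (MM1 MM2 : Ar → ℕ)
    (h1 : Admissible att Lab1) (hmm1 : IsMinMax att Lab1 MM1)
    (h2 : Admissible att Lab2) (hmm2 : IsMinMax att Lab2 MM2)
    (hle : LabLe Lab1 Lab2) :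
    ∀ x, Lab1 x ≠ Label.und → MM2 x ≤ MM1 x := by
  intro x
  induction x using (measure MM1).wf.induction with
  | _ x ih =>
  intro hx
  cases h : Lab1 x with
  | inn =>
    obtain ⟨n, hn, hatt⟩ := hmm1.exists_eq_succ_of_inn h1 h
    rw [hn]
    refine hmm2.le_succ_of_inn h2 (hle.1 x h) fun y hy => ?_
    have hyL : Lab1 y = .out := h1.1 x h y hy
    have hyx : MM1 y < MM1 x := hn ▸ Nat.lt_succ_of_le (hatt y hy)
    exact (ih y hyx (by simp [hyL])).trans (hatt y hy)
  | out =>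
    obtain ⟨z, hz, hzL, hn⟩ := hmm1.exists_eq_succ_of_out h1 h
    have hzx : MM1 z < MM1 x := hn ▸ Nat.lt_succ_self _
    calc MM2 x ≤ MM2 z + 1 := hmm2.le_succ_of_out (hle.2 x h) hz (hle.1 z hzL)
      _ ≤ MM1 z + 1 := Nat.add_le_add_right (ih z hzx (by simp [hzL])) 1
      _ = MM1 x := hn.symm
  | und => exact absurd h hx
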